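/- arXiv:2303.07658 — 2 statements merged into one kernel-verified Lean document; each statement's English description precedes it below -/
import Mathlib

section
/- Let n ≥ 2 and I ⊆ [2,n-1]. Then Σ_{σ ∈ D_n^{I ∪ {0}}} (-1)^{ℓ(σ)} x^{L(σ)} = Σ_{σ ∈ D_n^{I ∪ {1}}} (-1)^{ℓ(σ)} x^{L(σ)}. -/
open Polynomial Finset

namespace OddLength

/-- A signed permutation of degree `n`, encoded as an underlying permutation of
`Fin n` together with a sign vector. -/
abbrev SP (n : ℕ) := Equiv.Perm (Fin n) × (Fin n → Bool)

/-- The one-line value `σ(i)` of a signed permutation, for `i ∈ [1,n]` (and `0` elsewhere). -/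
def sval {n : ℕ} (σ : SP n) (i : ℕ) : ℤ :=
  if h : 1 ≤ i ∧ i ≤ n then
    (if σ.2 ⟨i - 1, by omega⟩ then (-1 : ℤ) else 1) *
      (((σ.1 ⟨i - 1, by omega⟩ : Fin n) : ℕ) + 1 : ℤ)
  else 0

/-- A signed permutation is *even* (lies in the Weyl group `D_n`) if it has an even
number of negative entries in its one-line notation. -/
def IsEvenSP {n : ℕ} (σ : SP n) : Prop :=
  Even ((Finset.univ.filter (fun i => σ.2 i = true)).card)

instance {n : ℕ} (σ : SP n) : Decidable (IsEvenSP σ) := by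
  unfold IsEvenSP; infer_instance

/-- Pairs `1 ≤ i < j ≤ n` of positions. -/
def pairs (n : ℕ) : Finset (ℕ × ℕ) :=
  (Finset.Icc 1 n ×ˢ Finset.Icc 1 n).filter (fun p => p.1 < p.2)

/-- Number of inversions. -/
def invSP {n : ℕ} (σ : SP n) : ℕ :=
  ((pairs n).filter (fun p => sval σ p.2 < sval σ p.1)).card

/-- Number of negative sum pairs. -/
def nspSP {n : ℕ} (σ : SP n) : ℕ :=
  ((pairs n).filter (fun p => sval σ p.1 + sval σ p.2 < 0)).card

/-- Number of odd inversions (positions of different parity). -/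
def oinvSP {n : ℕ} (σ : SP n) : ℕ :=
  ((pairs n).filter (fun p => sval σ p.2 < sval σ p.1 ∧ p.1 % 2 ≠ p.2 % 2)).card

/-- Number of odd negative sum pairs (positions of different parity). -/
def onspSP {n : ℕ} (σ : SP n) : ℕ :=
  ((pairs n).filter (fun p => sval σ p.1 + sval σ p.2 < 0 ∧ p.1 % 2 ≠ p.2 % 2)).card

/-- The type-`D` Coxeter length `ℓ(σ) = inv(σ) + nsp(σ)`. -/
def ellD {n : ℕ} (σ : SP n) : ℕ := invSP σ + nspSP σ

/-- The type-`D` odd length `L(σ) = oinv(σ) + onsp(σ)`. -/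
def LD {n : ℕ} (σ : SP n) : ℕ := oinvSP σ + onspSP σ

/-- The descent value at position `i`, with the type-`D` convention `σ(0) := -σ(2)`. -/
def dval {n : ℕ} (σ : SP n) (i : ℕ) : ℤ := if i = 0 then -sval σ 2 else sval σ i

/-- Membership in the parabolic quotient `D_n^I`: `σ(i) < σ(i+1)` for all `i ∈ I`,
with the convention `σ(0) = -σ(2)`. -/
def InQuot {n : ℕ} (σ : SP n) (I : Finset ℕ) : Prop :=
  ∀ i ∈ I, dval σ i < dval σ (i + 1)

instance {n : ℕ} (σ : SP n) (I : Finset ℕ) : Decidable (InQuot σ I) := by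
  unfold InQuot; infer_instance

/-- `σ` is ascending: `σ(1) < σ(2) < ⋯ < σ(n)`. -/
def Ascending {n : ℕ} (σ : SP n) : Prop :=
  ∀ i, 1 ≤ i → i < n → sval σ i < sval σ (i + 1)

/-- `σ` is a chessboard element: `σ(i) ≢ σ(i+1) (mod 2)` for all `i ∈ [n-1]`. -/
def Chessboard {n : ℕ} (σ : SP n) : Prop :=
  ∀ i ∈ Finset.Icc 1 (n - 1), sval σ i % 2 ≠ sval σ (i + 1) % 2

instance {n : ℕ} (σ : SP n) : Decidable (Chessboard σ) := by
  unfold Chessboard; infer_instance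

/-- The sign-twisted generating function of the odd length over `D_n^I`. -/
noncomputable def genD (n : ℕ) (I : Finset ℕ) : Polynomial ℤ :=
  ∑ σ ∈ Finset.univ.filter (fun σ : SP n => IsEvenSP σ ∧ InQuot σ I),
    (-1 : Polynomial ℤ) ^ ellD σ * X ^ LD σ



/-! ### Auxiliary machinery: the diagram automorphism of `D_n` -/

/-- The flip bit: (0-indexed) position `k` is flipped iff exactly one of
"`k` is the first position" and "the value at `k` has absolute value `1`" holds. -/
def flipbit {n : ℕ} (π : Equiv.Perm (Fin n)) (k : Fin n) : Bool :=
  xor (decide ((k : ℕ) = 0)) (decide (((π k : Fin n) : ℕ) = 0))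

/-- The diagram automorphism (conjugation by `diag(-1,1,…,1)`). -/
def gammaD {n : ℕ} (σ : SP n) : SP n :=
  (σ.1, fun k => xor (σ.2 k) (flipbit σ.1 k))

lemma gammaD_gammaD {n : ℕ} (σ : SP n) : gammaD (gammaD σ) = σ := by
  unfold gammaD
  refine Prod.ext rfl ?_
  funext k
  simp [Bool.xor_assoc]

/-- Full description of `sval σ i` and `sval (gammaD σ) i`. -/
lemma sval_both {n : ℕ} (σ : SP n) (i : ℕ) (h1 : 1 ≤ i) (h2 : i ≤ n) :
    ∃ m : ℕ, ((σ.1 ⟨i - 1, by omega⟩ : Fin n) : ℕ) = m ∧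
      (sval σ i = (m : ℤ) + 1 ∨ sval σ i = -((m : ℤ) + 1)) ∧
      ((sval (gammaD σ) i = sval σ i ∧ ((i = 1) ↔ (m = 0))) ∨
       (sval (gammaD σ) i = -sval σ i ∧ ¬((i = 1) ↔ (m = 0)))) := by
  have hb : sval σ i = (if σ.2 ⟨i - 1, by omega⟩ = true then (-1 : ℤ) else 1) *
      (((σ.1 ⟨i - 1, by omega⟩ : Fin n) : ℕ) + 1 : ℤ) := by
    unfold sval; rw [dif_pos ⟨h1, h2⟩]
  have hg : sval (gammaD σ) i =
      (if xor (σ.2 ⟨i - 1, by omega⟩) (flipbit σ.1 ⟨i - 1, by omega⟩) = true then (-1 : ℤ) else 1) *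
      (((σ.1 ⟨i - 1, by omega⟩ : Fin n) : ℕ) + 1 : ℤ) := by
    unfold sval gammaD; rw [dif_pos ⟨h1, h2⟩]
  refine ⟨((σ.1 ⟨i - 1, by omega⟩ : Fin n) : ℕ), rfl, ?_, ?_⟩
  · simp only [hb]; split_ifs
    · right; push_cast; ring
    · left; push_cast; ring
  · have hx : ∀ a b : Bool, (xor a b = true) ↔ ¬(a = b) := by decide
    have h10 : ((⟨i - 1, by omega⟩ : Fin n) : ℕ) = 0 ↔ i = 1 := by
      show i - 1 = 0 ↔ i = 1; omega
    have hflip : flipbit σ.1 ⟨i - 1, by omega⟩ = true ↔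
        ¬((i = 1) ↔ ((σ.1 ⟨i - 1, by omega⟩ : Fin n) : ℕ) = 0) := by
      unfold flipbit
      simp only [hx, decide_eq_decide, h10]
    by_cases hf : flipbit σ.1 ⟨i - 1, by omega⟩ = true
    · right
      refine ⟨?_, hflip.mp hf⟩
      simp only [hg, hb, hf]
      cases hs : σ.2 (⟨i - 1, by omega⟩ : Fin n) <;> simp [hs] <;> ring
    · left
      refine ⟨?_, not_not.mp fun hc => hf (hflip.mpr hc)⟩
      rw [Bool.not_eq_true] at hf
      simp only [hg, hb, hf]
      simp

lemma val_ne {n : ℕ} (σ : SP n) (i j : ℕ) (h1 : 1 ≤ i) (h1j : 1 ≤ j) (hij : i ≠ j)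
    (hi : i ≤ n) (hj : j ≤ n) (mi mj : ℕ)
    (hmi : ((σ.1 ⟨i - 1, by omega⟩ : Fin n) : ℕ) = mi)
    (hmj : ((σ.1 ⟨j - 1, by omega⟩ : Fin n) : ℕ) = mj) : mi ≠ mj := by
  intro h
  have hv : (σ.1 (⟨i - 1, by omega⟩ : Fin n)) = σ.1 (⟨j - 1, by omega⟩ : Fin n) :=
    Fin.val_injective (by rw [hmi, hmj, h])
  have h2 := congrArg Fin.val (σ.1.injective hv)
  simp only [] at h2
  have : i - 1 = j - 1 := h2
  omega

/-- Per-pair invariance of the length contribution under `gammaD`. -/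
lemma pair_f {n : ℕ} (σ : SP n) (i j : ℕ) (h1 : 1 ≤ i) (hij : i < j) (hj : j ≤ n) :
    ((if sval (gammaD σ) j < sval (gammaD σ) i then 1 else 0) +
      (if sval (gammaD σ) i + sval (gammaD σ) j < 0 then 1 else 0) : ℕ) =
    (if sval σ j < sval σ i then 1 else 0) +
      (if sval σ i + sval σ j < 0 then 1 else 0) := by
  obtain ⟨mi, hmi, hvi, hgi⟩ := sval_both σ i h1 (by omega)
  obtain ⟨mj, hmj, hvj, hgj⟩ := sval_both σ j (by omega) hj
  have hne : mi ≠ mj := val_ne σ i j h1 (by omega) (by omega) (by omega) hj mi mj hmi hmj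
  rcases hgi with ⟨hgi, hci⟩ | ⟨hgi, hci⟩ <;> rcases hgj with ⟨hgj, hcj⟩ | ⟨hgj, hcj⟩ <;>
    simp only [hgi, hgj] <;> rcases hvi with hvi | hvi <;> rcases hvj with hvj | hvj <;>
    simp only [hvi, hvj] <;> split_ifs <;> omega

/-- Per-pair invariance of the odd length contribution under `gammaD`. -/
lemma pair_fO {n : ℕ} (σ : SP n) (i j : ℕ) (h1 : 1 ≤ i) (hij : i < j) (hj : j ≤ n) :
    ((if sval (gammaD σ) j < sval (gammaD σ) i ∧ i % 2 ≠ j % 2 then 1 else 0) +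
      (if sval (gammaD σ) i + sval (gammaD σ) j < 0 ∧ i % 2 ≠ j % 2 then 1 else 0) : ℕ) =
    (if sval σ j < sval σ i ∧ i % 2 ≠ j % 2 then 1 else 0) +
      (if sval σ i + sval σ j < 0 ∧ i % 2 ≠ j % 2 then 1 else 0) := by
  by_cases hP : i % 2 = j % 2
  · simp [hP]
  · simpa [hP] using pair_f σ i j h1 hij hj

lemma ellD_gammaD {n : ℕ} (σ : SP n) : ellD (gammaD σ) = ellD σ := by
  unfold ellD invSP nspSP
  rw [Finset.card_filter, Finset.card_filter, Finset.card_filter, Finset.card_filter,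
    ← Finset.sum_add_distrib, ← Finset.sum_add_distrib]
  refine Finset.sum_congr rfl ?_
  rintro ⟨i, j⟩ hp
  simp only [pairs, Finset.mem_filter, Finset.mem_product, Finset.mem_Icc] at hp
  exact pair_f σ i j hp.1.1.1 hp.2 hp.1.2.2

lemma LD_gammaD {n : ℕ} (σ : SP n) : LD (gammaD σ) = LD σ := by
  unfold LD oinvSP onspSP
  rw [Finset.card_filter, Finset.card_filter, Finset.card_filter, Finset.card_filter,
    ← Finset.sum_add_distrib, ← Finset.sum_add_distrib]
  refine Finset.sum_congr rfl ?_
  rintro ⟨i, j⟩ hp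
  simp only [pairs, Finset.mem_filter, Finset.mem_product, Finset.mem_Icc] at hp
  exact pair_fO σ i j hp.1.1.1 hp.2 hp.1.2.2

lemma even_gammaD {n : ℕ} (σ : SP n) : IsEvenSP (gammaD σ) ↔ IsEvenSP σ := by
  have hcast : ∀ m : ℕ, Even m ↔ (m : ZMod 2) = 0 := by
    intro m
    rw [even_iff_two_dvd]
    exact (ZMod.natCast_eq_zero_iff m 2).symm
  unfold IsEvenSP
  rw [hcast, hcast]
  have key : (((Finset.univ.filter (fun k => (gammaD σ).2 k = true)).card : ℕ) : ZMod 2)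
      = (((Finset.univ.filter (fun k => σ.2 k = true)).card : ℕ) : ZMod 2) := by
    rw [Finset.card_filter, Finset.card_filter, Nat.cast_sum, Nat.cast_sum]
    have hterm : ∀ k : Fin n,
        (((if (gammaD σ).2 k = true then 1 else 0 : ℕ)) : ZMod 2)
        = (((if σ.2 k = true then 1 else 0 : ℕ)) : ZMod 2)
          + ((if (k : ℕ) = 0 then (1 : ZMod 2) else 0)
            + (if ((σ.1 k : Fin n) : ℕ) = 0 then (1 : ZMod 2) else 0)) := by
      intro k
      show (((if xor (σ.2 k) (flipbit σ.1 k) = true then 1 else 0 : ℕ)) : ZMod 2) = _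
      unfold flipbit
      cases hs : σ.2 k <;> by_cases hA : (k : ℕ) = 0 <;>
        by_cases hB : ((σ.1 k : Fin n) : ℕ) = 0 <;> simp [hs, hA, hB] <;> decide
    rw [Finset.sum_congr rfl (fun k _ => hterm k), Finset.sum_add_distrib,
      Finset.sum_add_distrib]
    rw [Equiv.sum_comp σ.1 (fun x : Fin n => if (x : ℕ) = 0 then (1 : ZMod 2) else 0)]
    rw [CharTwo.add_self_eq_zero, add_zero]
  rw [key]

lemma lt_gammaD {n : ℕ} (σ : SP n) (i j : ℕ) (h1 : 2 ≤ i) (h1j : 2 ≤ j) (hij : i ≠ j)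
    (hi : i ≤ n) (hj : j ≤ n) :
    sval (gammaD σ) i < sval (gammaD σ) j ↔ sval σ i < sval σ j := by
  obtain ⟨mi, hmi, hvi, hgi⟩ := sval_both σ i (by omega) hi
  obtain ⟨mj, hmj, hvj, hgj⟩ := sval_both σ j (by omega) hj
  have hne : mi ≠ mj := val_ne σ i j (by omega) (by omega) hij hi hj mi mj hmi hmj
  rcases hgi with ⟨hgi, hci⟩ | ⟨hgi, hci⟩ <;> rcases hgj with ⟨hgj, hcj⟩ | ⟨hgj, hcj⟩ <;>
    simp only [hgi, hgj] <;> rcases hvi with hvi | hvi <;> rcases hvj with hvj | hvj <;>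
    simp only [hvi, hvj] <;> constructor <;> intro hlt <;> omega

lemma cond01_gammaD {n : ℕ} (σ : SP n) (hn : 2 ≤ n) :
    -sval σ 2 < sval σ 1 ↔ sval (gammaD σ) 1 < sval (gammaD σ) 2 := by
  obtain ⟨m1, hm1, hv1, hg1⟩ := sval_both σ 1 le_rfl (by omega)
  obtain ⟨m2, hm2, hv2, hg2⟩ := sval_both σ 2 (by omega) hn
  have hne : m1 ≠ m2 := val_ne σ 1 2 le_rfl (by omega) (by omega) (by omega) hn m1 m2 hm1 hm2
  rcases hg1 with ⟨hg1, hc1⟩ | ⟨hg1, hc1⟩ <;> rcases hg2 with ⟨hg2, hc2⟩ | ⟨hg2, hc2⟩ <;>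
    simp only [hg1, hg2] <;> rcases hv1 with hv1 | hv1 <;> rcases hv2 with hv2 | hv2 <;>
    simp only [hv1, hv2] <;> constructor <;> intro hlt <;> omega

lemma inQuot_gammaD {n : ℕ} (σ : SP n) (hn : 2 ≤ n) (I : Finset ℕ)
    (hI : I ⊆ Finset.Icc 2 (n - 1)) :
    InQuot σ (insert 0 I) ↔ InQuot (gammaD σ) (insert 1 I) := by
  unfold InQuot
  constructor
  · intro h i hi
    rcases Finset.mem_insert.mp hi with rfl | hi
    · have h0 := h 0 (Finset.mem_insert_self 0 I)
      simp only [dval, if_pos rfl, if_neg one_ne_zero] at h0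
      simp only [dval, if_neg one_ne_zero, if_neg (by omega : ¬(1 + 1 = 0))]
      exact (cond01_gammaD σ hn).mp h0
    · have hmem := hI hi
      rw [Finset.mem_Icc] at hmem
      have h2 := h i (Finset.mem_insert_of_mem hi)
      simp only [dval, if_neg (show ¬i = 0 by omega), if_neg (show ¬(i + 1 = 0) by omega)] at h2 ⊢
      exact (lt_gammaD σ i (i + 1) (by omega) (by omega) (by omega) (by omega) (by omega)).mpr h2
  · intro h i hi
    rcases Finset.mem_insert.mp hi with rfl | hi
    · have h1 := h 1 (Finset.mem_insert_self 1 I)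
      simp only [dval, if_neg one_ne_zero, if_neg (by omega : ¬(1 + 1 = 0))] at h1
      simp only [dval, if_pos rfl, if_neg one_ne_zero]
      exact (cond01_gammaD σ hn).mpr h1
    · have hmem := hI hi
      rw [Finset.mem_Icc] at hmem
      have h2 := h i (Finset.mem_insert_of_mem hi)
      simp only [dval, if_neg (show ¬i = 0 by omega), if_neg (show ¬(i + 1 = 0) by omega)] at h2 ⊢
      exact (lt_gammaD σ i (i + 1) (by omega) (by omega) (by omega) (by omega) (by omega)).mp h2


/-- Lemma 3.1: for `I ⊆ [2,n-1]`, `D_n^{I ∪ {0}}(x) = D_n^{I ∪ {1}}(x)`. -/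
theorem stmt12 (n : ℕ) (hn : 2 ≤ n) (I : Finset ℕ) (hI : I ⊆ Finset.Icc 2 (n - 1)) :
    genD n (insert 0 I) = genD n (insert 1 I) := by
  unfold genD
  refine Finset.sum_nbij' gammaD gammaD ?_ ?_ ?_ ?_ ?_
  · intro σ hσ
    simp only [Finset.mem_filter, Finset.mem_univ, true_and] at hσ ⊢
    exact ⟨(even_gammaD σ).mpr hσ.1, (inQuot_gammaD σ hn I hI).mp hσ.2⟩
  · intro σ hσ
    simp only [Finset.mem_filter, Finset.mem_univ, true_and] at hσ ⊢
    refine ⟨(even_gammaD σ).mpr hσ.1, ?_⟩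
    have := (inQuot_gammaD (gammaD σ) hn I hI).mpr
    rw [gammaD_gammaD] at this
    exact this hσ.2
  · intro σ _
    exact gammaD_gammaD σ
  · intro σ _
    exact gammaD_gammaD σ
  · intro σ _
    rw [ellD_gammaD, LD_gammaD]


end OddLength
end

section
/- Let n ≥ 3, a ∈ [2,n-1], I ⊆ {0,…,n-1} with a+1 ∉ I, and suppose: if a = 3 then 0,1 ∉ I, and if a ≥ 4 then a-2 ∉ I. Then for n' ∈ {n,-n}, Σ_{σ ∈ D_n^I, σ(a)=n'} (-1)^{ℓ(σ)} x^{L(σ)} = 0. -/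
open Polynomial Finset

namespace OddLength

section Aux

variable {n : ℕ}

lemma sval_def (σ : SP n) {i : ℕ} (h1 : 1 ≤ i) (h2 : i ≤ n) :
    sval σ i = (if σ.2 ⟨i - 1, by omega⟩ then (-1 : ℤ) else 1) *
      (((σ.1 ⟨i - 1, by omega⟩ : Fin n) : ℕ) + 1 : ℤ) := by
  rw [sval, dif_pos ⟨h1, h2⟩]

lemma abs_sval (σ : SP n) {i : ℕ} (h1 : 1 ≤ i) (h2 : i ≤ n) :
    |sval σ i| = (((σ.1 ⟨i - 1, by omega⟩ : Fin n) : ℕ) + 1 : ℤ) := by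
  rw [sval_def σ h1 h2]
  split_ifs
  · rw [neg_one_mul, abs_neg]; exact abs_of_pos (by positivity)
  · rw [one_mul]; exact abs_of_pos (by positivity)

lemma abs_sval_inj (σ : SP n) {i j : ℕ} (hi1 : 1 ≤ i) (hi2 : i ≤ n)
    (hj1 : 1 ≤ j) (hj2 : j ≤ n) (h : |sval σ i| = |sval σ j|) : i = j := by
  rw [abs_sval σ hi1 hi2, abs_sval σ hj1 hj2] at h
  have h2 : ((σ.1 ⟨i - 1, by omega⟩ : Fin n) : ℕ) = ((σ.1 ⟨j - 1, by omega⟩ : Fin n) : ℕ) := by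
    omega
  have h3 : σ.1 ⟨i - 1, by omega⟩ = σ.1 ⟨j - 1, by omega⟩ := Fin.ext h2
  have h4 := σ.1.injective h3
  have h5 : i - 1 = j - 1 := congrArg Fin.val h4
  omega

lemma sval_injOn (σ : SP n) {i j : ℕ} (hi1 : 1 ≤ i) (hi2 : i ≤ n)
    (hj1 : 1 ≤ j) (hj2 : j ≤ n) (h : sval σ i = sval σ j) : i = j :=
  abs_sval_inj σ hi1 hi2 hj1 hj2 (by rw [h])

lemma abs_sval_le (σ : SP n) {i : ℕ} (h1 : 1 ≤ i) (h2 : i ≤ n) :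
    |sval σ i| ≤ n := by
  rw [abs_sval σ h1 h2]
  have := (σ.1 ⟨i - 1, by omega⟩).isLt
  omega

/-- Strict bound for positions other than the one carrying `±n`. -/
lemma abs_sval_lt (σ : SP n) {a j : ℕ} {n' : ℤ}
    (hn' : n' = (n : ℤ) ∨ n' = -(n : ℤ))
    (ha1 : 1 ≤ a) (ha2 : a ≤ n) (hσ : sval σ a = n')
    (hj1 : 1 ≤ j) (hj2 : j ≤ n) (hja : j ≠ a) : |sval σ j| < n := by
  have hle := abs_sval_le σ hj1 hj2
  rcases lt_or_eq_of_le hle with h | h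
  · exact h
  · exfalso
    have hA : |sval σ a| = (n : ℤ) := by
      rw [hσ]; rcases hn' with rfl | rfl <;> simp
    exact hja (abs_sval_inj σ hj1 hj2 ha1 ha2 (by rw [h, hA]))

lemma sval_bounds (σ : SP n) {a j : ℕ} {n' : ℤ}
    (hn' : n' = (n : ℤ) ∨ n' = -(n : ℤ))
    (ha1 : 1 ≤ a) (ha2 : a ≤ n) (hσ : sval σ a = n')
    (hj1 : 1 ≤ j) (hj2 : j ≤ n) (hja : j ≠ a) :
    -(n : ℤ) < sval σ j ∧ sval σ j < n :=
  abs_lt.mp (abs_sval_lt σ hn' ha1 ha2 hσ hj1 hj2 hja)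

/-- The relabelling of positions exchanging `a-1` and `a+1`. -/
def rr (a i : ℕ) : ℕ := if i = a - 1 then a + 1 else if i = a + 1 then a - 1 else i

lemma rr_rr (a i : ℕ) (h2 : 2 ≤ a) : rr a (rr a i) = i := by
  unfold rr; split_ifs <;> omega

lemma rr_range {a : ℕ} (hh : 2 ≤ a ∧ a + 1 ≤ n) (i : ℕ) :
    (1 ≤ rr a i ∧ rr a i ≤ n) ↔ (1 ≤ i ∧ i ≤ n) := by
  unfold rr; split_ifs <;> omega

lemma rr_mod (a i : ℕ) (h2 : 2 ≤ a) : rr a i % 2 = i % 2 := by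
  unfold rr; split_ifs <;> omega

lemma rr_am1 (a : ℕ) : rr a (a - 1) = a + 1 := by unfold rr; rw [if_pos rfl]

lemma rr_a (a : ℕ) (h2 : 2 ≤ a) : rr a a = a := by
  unfold rr; rw [if_neg (by omega), if_neg (by omega)]

lemma rr_ap1 (a : ℕ) (h2 : 2 ≤ a) : rr a (a + 1) = a - 1 := by
  unfold rr; rw [if_neg (by omega), if_pos rfl]

lemma rr_self {a i : ℕ} (h1 : i ≠ a - 1) (h2 : i ≠ a + 1) : rr a i = i := by
  unfold rr; rw [if_neg h1, if_neg h2]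

/-- The swap of `Fin n` indices `a-2` and `a` (i.e. positions `a-1` and `a+1`). -/
def tau (n a : ℕ) (hh : 2 ≤ a ∧ a + 1 ≤ n) : Equiv.Perm (Fin n) :=
  Equiv.swap ⟨a - 2, by omega⟩ ⟨a, by omega⟩

/-- The involution on signed permutations exchanging the entries at positions
`a-1` and `a+1`. -/
def iota (n a : ℕ) (hh : 2 ≤ a ∧ a + 1 ≤ n) (σ : SP n) : SP n :=
  (σ.1 * tau n a hh, σ.2 ∘ ⇑(tau n a hh))

lemma tau_apply {a : ℕ} (hh : 2 ≤ a ∧ a + 1 ≤ n) {i : ℕ} (h1 : 1 ≤ i) (h2 : i ≤ n) :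
    (tau n a hh) ⟨i - 1, by omega⟩ = ⟨rr a i - 1, by
      have := (rr_range hh i).mpr ⟨h1, h2⟩; omega⟩ := by
  unfold tau
  rcases eq_or_ne i (a - 1) with h | h
  · have e1 : (⟨i - 1, by omega⟩ : Fin n) = ⟨a - 2, by omega⟩ := by
      apply Fin.ext; simp; omega
    rw [e1, Equiv.swap_apply_left]
    apply Fin.ext; simp [h, rr_am1]
  rcases eq_or_ne i (a + 1) with h' | h'
  · have e1 : (⟨i - 1, by omega⟩ : Fin n) = ⟨a, by omega⟩ := by
      apply Fin.ext; simp; omega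
    rw [e1, Equiv.swap_apply_right]
    apply Fin.ext; simp [h', rr_ap1 a hh.1]; omega
  · rw [Equiv.swap_apply_of_ne_of_ne (by simp; omega) (by simp; omega)]
    apply Fin.ext; simp [rr_self h h']

lemma sval_iota {a : ℕ} (hh : 2 ≤ a ∧ a + 1 ≤ n) (σ : SP n) (i : ℕ) :
    sval (iota n a hh σ) i = sval σ (rr a i) := by
  by_cases hi : 1 ≤ i ∧ i ≤ n
  · have hri : 1 ≤ rr a i ∧ rr a i ≤ n := (rr_range hh i).mpr hi
    rw [sval_def _ hi.1 hi.2, sval_def _ hri.1 hri.2]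
    have key := tau_apply hh hi.1 hi.2
    show (if (iota n a hh σ).2 ⟨i-1, by omega⟩ then (-1:ℤ) else 1) * _ = _
    have e2 : (iota n a hh σ).2 ⟨i - 1, by omega⟩ = σ.2 ⟨rr a i - 1, by omega⟩ := by
      show σ.2 ((tau n a hh) ⟨i - 1, by omega⟩) = _
      rw [key]
    have e1 : ((iota n a hh σ).1 ⟨i - 1, by omega⟩ : Fin n) = σ.1 ⟨rr a i - 1, by omega⟩ := by
      show (σ.1 * tau n a hh) ⟨i - 1, by omega⟩ = _
      rw [Equiv.Perm.mul_apply, key]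
    rw [e1, e2]
  · have hri : ¬(1 ≤ rr a i ∧ rr a i ≤ n) := fun hc => hi ((rr_range hh i).mp hc)
    rw [sval, dif_neg hi, sval, dif_neg hri]

end Aux
section Aux2

variable {n : ℕ}

lemma mem_pairs {x : ℕ × ℕ} :
    x ∈ pairs n ↔ (1 ≤ x.1 ∧ x.1 ≤ n) ∧ (1 ≤ x.2 ∧ x.2 ≤ n) ∧ x.1 < x.2 := by
  unfold pairs
  simp only [Finset.mem_filter, Finset.mem_product, Finset.mem_Icc]
  tauto

/-- The involution on pairs of positions induced by `rr`. -/
def gg (a : ℕ) (x : ℕ × ℕ) : ℕ × ℕ :=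
  if x = (a - 1, a) ∨ x = (a, a + 1) ∨ x = (a - 1, a + 1) then x
  else (rr a x.1, rr a x.2)

lemma gg_mem {a : ℕ} (hh : 2 ≤ a ∧ a + 1 ≤ n) {x : ℕ × ℕ} (hx : x ∈ pairs n) :
    gg a x ∈ pairs n := by
  rw [mem_pairs] at hx ⊢
  obtain ⟨u, v⟩ := x
  unfold gg
  split_ifs with h
  · exact hx
  · simp only [Prod.mk.injEq, not_or] at h
    dsimp only at hx ⊢
    unfold rr
    split_ifs <;> omega

lemma gg_gg {a : ℕ} (hh : 2 ≤ a ∧ a + 1 ≤ n) {x : ℕ × ℕ} (hx : x ∈ pairs n) :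
    gg a (gg a x) = x := by
  rw [mem_pairs] at hx
  obtain ⟨u, v⟩ := x
  by_cases h : (u, v) = (a - 1, a) ∨ (u, v) = (a, a + 1) ∨ (u, v) = (a - 1, a + 1)
  · unfold gg
    rw [if_pos h, if_pos h]
  · have h' : ¬((rr a u, rr a v) = (a - 1, a) ∨ (rr a u, rr a v) = (a, a + 1) ∨
        (rr a u, rr a v) = (a - 1, a + 1)) := by
      simp only [Prod.mk.injEq, not_or] at h ⊢
      dsimp only at hx
      unfold rr
      split_ifs <;> omega
    unfold gg
    rw [if_neg h, if_neg h']
    simp only [Prod.mk.injEq]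
    exact ⟨rr_rr a u hh.1, rr_rr a v hh.1⟩

lemma gg_mod {a : ℕ} (h2 : 2 ≤ a) (x : ℕ × ℕ) :
    ((gg a x).1 % 2 = (gg a x).2 % 2) ↔ (x.1 % 2 = x.2 % 2) := by
  unfold gg
  split_ifs with h
  · rfl
  · show (rr a x.1 % 2 = rr a x.2 % 2) ↔ _
    rw [rr_mod a x.1 h2, rr_mod a x.2 h2]

section Transfer

variable {a : ℕ} (hh : 2 ≤ a ∧ a + 1 ≤ n) (σ : SP n) {n' : ℤ}
  (hn' : n' = (n : ℤ) ∨ n' = -(n : ℤ)) (hσ : sval σ a = n')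

include hh hn' hσ

lemma bound_am1 : -(n : ℤ) < sval σ (a - 1) ∧ sval σ (a - 1) < n :=
  sval_bounds σ hn' (by omega) (by omega) hσ (by omega) (by omega) (by omega)

lemma bound_ap1 : -(n : ℤ) < sval σ (a + 1) ∧ sval σ (a + 1) < n :=
  sval_bounds σ hn' (by omega) (by omega) hσ (by omega) (by omega) (by omega)

/-- Transfer of the negative-sum condition along the involution. -/
lemma sum_transfer {x : ℕ × ℕ} (hx : x ∈ pairs n) :
    (sval (iota n a hh σ) x.1 + sval (iota n a hh σ) x.2 < 0) ↔
      (sval σ (gg a x).1 + sval σ (gg a x).2 < 0) := by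
  have hb1 := bound_am1 hh σ hn' hσ
  have hb2 := bound_ap1 hh σ hn' hσ
  have hn3 : 1 ≤ n := by omega
  rw [sval_iota hh σ x.1, sval_iota hh σ x.2]
  unfold gg
  split_ifs with h
  · rcases h with h | h | h <;> subst h <;>
      simp only [rr_am1, rr_a a hh.1, rr_ap1 a hh.1, hσ] <;>
      rcases hn' with rfl | rfl <;> omega
  · exact Iff.rfl

/-- Transfer of the inversion condition along the involution, away from the
exceptional pair `(a-1, a+1)`. -/
lemma lt_transfer {x : ℕ × ℕ} (hx : x ∈ pairs n) (hne : x ≠ (a - 1, a + 1)) :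
    (sval (iota n a hh σ) x.2 < sval (iota n a hh σ) x.1) ↔
      (sval σ (gg a x).2 < sval σ (gg a x).1) := by
  have hb1 := bound_am1 hh σ hn' hσ
  have hb2 := bound_ap1 hh σ hn' hσ
  have hn3 : 1 ≤ n := by omega
  rw [sval_iota hh σ x.1, sval_iota hh σ x.2]
  unfold gg
  split_ifs with h
  · rcases h with h | h | h
    · subst h
      simp only [rr_am1, rr_a a hh.1, hσ]
      rcases hn' with rfl | rfl <;> omega
    · subst h
      simp only [rr_a a hh.1, rr_ap1 a hh.1, hσ]
      rcases hn' with rfl | rfl <;> omega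
    · exact absurd h hne
  · exact Iff.rfl

end Transfer

end Aux2
section Aux3

variable {n a : ℕ} (hh : 2 ≤ a ∧ a + 1 ≤ n) (σ : SP n) {n' : ℤ}
  (hn' : n' = (n : ℤ) ∨ n' = -(n : ℤ)) (hσ : sval σ a = n')

lemma iota_iota : iota n a hh (iota n a hh σ) = σ := by
  unfold iota
  refine Prod.ext ?_ ?_
  · show σ.1 * tau n a hh * tau n a hh = σ.1
    rw [mul_assoc]; unfold tau; rw [Equiv.swap_mul_self, mul_one]
  · show (σ.2 ∘ ⇑(tau n a hh)) ∘ ⇑(tau n a hh) = σ.2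
    funext x
    show σ.2 ((tau n a hh) ((tau n a hh) x)) = σ.2 x
    unfold tau; rw [Equiv.swap_apply_self]

lemma iota_ne : iota n a hh σ ≠ σ := by
  intro hc
  have h1 : σ.1 * tau n a hh = σ.1 := congrArg Prod.fst hc
  have h2 := congrArg (fun f : Equiv.Perm (Fin n) => f ⟨a - 2, by omega⟩) h1
  simp only [Equiv.Perm.mul_apply] at h2
  have h3 : (tau n a hh) ⟨a - 2, by omega⟩ = ⟨a - 2, by omega⟩ := σ.1.injective h2
  unfold tau at h3
  rw [Equiv.swap_apply_left] at h3
  have := congrArg Fin.val h3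
  simp at this
  omega

lemma even_iota : IsEvenSP (iota n a hh σ) ↔ IsEvenSP σ := by
  unfold IsEvenSP
  have hc : (Finset.univ.filter (fun i => (iota n a hh σ).2 i = true)).card =
      (Finset.univ.filter (fun i => σ.2 i = true)).card := by
    refine Finset.card_bij' (fun x _ => tau n a hh x) (fun x _ => tau n a hh x) ?_ ?_ ?_ ?_
    · intro x hx
      rw [Finset.mem_filter] at hx ⊢
      exact ⟨Finset.mem_univ _, hx.2⟩
    · intro x hx
      rw [Finset.mem_filter] at hx ⊢
      refine ⟨Finset.mem_univ _, ?_⟩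
      show σ.2 ((tau n a hh) ((tau n a hh) x)) = true
      unfold tau; rw [Equiv.swap_apply_self]; exact hx.2
    · intro x _; unfold tau; exact Equiv.swap_apply_self _ _ _
    · intro x _; unfold tau; exact Equiv.swap_apply_self _ _ _
  rw [hc]

lemma sval_iota_a : sval (iota n a hh σ) a = sval σ a := by
  rw [sval_iota hh σ a, rr_a a hh.1]

lemma ne_exc_par {a : ℕ} (h2 : 2 ≤ a) {x : ℕ × ℕ} (hpar : x.1 % 2 ≠ x.2 % 2) :
    x ≠ (a - 1, a + 1) := by
  intro hc; subst hc
  exact hpar (by show (a - 1) % 2 = (a + 1) % 2; omega)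

lemma gg_exc (a : ℕ) : gg a (a - 1, a + 1) = (a - 1, a + 1) := by
  unfold gg; rw [if_pos (Or.inr (Or.inr rfl))]

include hn' hσ

lemma nsp_iota : nspSP (iota n a hh σ) = nspSP σ := by
  unfold nspSP
  refine Finset.card_bij' (fun x _ => gg a x) (fun x _ => gg a x) ?_ ?_ ?_ ?_
  · intro x hx
    rw [Finset.mem_filter] at hx ⊢
    exact ⟨gg_mem hh hx.1, (sum_transfer hh σ hn' hσ hx.1).mp hx.2⟩
  · intro x hx
    rw [Finset.mem_filter] at hx ⊢
    refine ⟨gg_mem hh hx.1, ?_⟩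
    have h := sum_transfer hh σ hn' hσ (gg_mem hh hx.1)
    rw [gg_gg hh hx.1] at h
    exact h.mpr hx.2
  · intro x hx; rw [Finset.mem_filter] at hx; exact gg_gg hh hx.1
  · intro x hx; rw [Finset.mem_filter] at hx; exact gg_gg hh hx.1

lemma onsp_iota : onspSP (iota n a hh σ) = onspSP σ := by
  unfold onspSP
  refine Finset.card_bij' (fun x _ => gg a x) (fun x _ => gg a x) ?_ ?_ ?_ ?_
  · intro x hx
    rw [Finset.mem_filter] at hx ⊢
    exact ⟨gg_mem hh hx.1, (sum_transfer hh σ hn' hσ hx.1).mp hx.2.1,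
      fun hc => hx.2.2 ((gg_mod hh.1 x).mp hc)⟩
  · intro x hx
    rw [Finset.mem_filter] at hx ⊢
    have hsum : sval (iota n a hh σ) (gg a x).1 + sval (iota n a hh σ) (gg a x).2 < 0 := by
      have h := sum_transfer hh σ hn' hσ (gg_mem hh hx.1)
      rw [gg_gg hh hx.1] at h
      exact h.mpr hx.2.1
    have hpar : (gg a x).1 % 2 ≠ (gg a x).2 % 2 := fun hc => hx.2.2 ((gg_mod hh.1 x).mp hc)
    exact ⟨gg_mem hh hx.1, hsum, hpar⟩
  · intro x hx; rw [Finset.mem_filter] at hx; exact gg_gg hh hx.1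
  · intro x hx; rw [Finset.mem_filter] at hx; exact gg_gg hh hx.1

lemma oinv_iota : oinvSP (iota n a hh σ) = oinvSP σ := by
  unfold oinvSP
  refine Finset.card_bij' (fun x _ => gg a x) (fun x _ => gg a x) ?_ ?_ ?_ ?_
  · intro x hx
    rw [Finset.mem_filter] at hx ⊢
    exact ⟨gg_mem hh hx.1,
      (lt_transfer hh σ hn' hσ hx.1 (ne_exc_par hh.1 hx.2.2)).mp hx.2.1,
      fun hc => hx.2.2 ((gg_mod hh.1 x).mp hc)⟩
  · intro x hx
    rw [Finset.mem_filter] at hx ⊢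
    have hpar : (gg a x).1 % 2 ≠ (gg a x).2 % 2 := fun hc => hx.2.2 ((gg_mod hh.1 x).mp hc)
    refine ⟨gg_mem hh hx.1, ?_, hpar⟩
    have h := lt_transfer hh σ hn' hσ (gg_mem hh hx.1)
      (ne_exc_par hh.1 hpar)
    rw [gg_gg hh hx.1] at h
    exact h.mpr hx.2.1
  · intro x hx; rw [Finset.mem_filter] at hx; exact gg_gg hh hx.1
  · intro x hx; rw [Finset.mem_filter] at hx; exact gg_gg hh hx.1

lemma inv_parity : Odd (invSP (iota n a hh σ) + invSP σ) := by
  classical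
  unfold invSP
  have hepairs : ((a - 1, a + 1) : ℕ × ℕ) ∈ pairs n := by rw [mem_pairs]; dsimp only; omega
  have hcard : (((pairs n).filter
        (fun p => sval (iota n a hh σ) p.2 < sval (iota n a hh σ) p.1)).erase
          (a - 1, a + 1)).card =
      (((pairs n).filter (fun p => sval σ p.2 < sval σ p.1)).erase (a - 1, a + 1)).card := by
    refine Finset.card_bij' (fun x _ => gg a x) (fun x _ => gg a x) ?_ ?_ ?_ ?_
    · intro x hx
      rw [Finset.mem_erase, Finset.mem_filter] at hx
      rw [Finset.mem_erase, Finset.mem_filter]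
      refine ⟨?_, gg_mem hh hx.2.1, (lt_transfer hh σ hn' hσ hx.2.1 hx.1).mp hx.2.2⟩
      intro hc
      have hc' : gg a x = (a - 1, a + 1) := hc
      apply hx.1
      rw [← gg_gg hh hx.2.1, hc', gg_exc a]
    · intro x hx
      rw [Finset.mem_erase, Finset.mem_filter] at hx
      rw [Finset.mem_erase, Finset.mem_filter]
      have hne : gg a x ≠ (a - 1, a + 1) := by
        intro hc
        apply hx.1
        rw [← gg_gg hh hx.2.1, hc, gg_exc a]
      refine ⟨hne, gg_mem hh hx.2.1, ?_⟩
      have h := lt_transfer hh σ hn' hσ (gg_mem hh hx.2.1) hne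
      rw [gg_gg hh hx.2.1] at h
      exact h.mpr hx.2.2
    · intro x hx
      rw [Finset.mem_erase, Finset.mem_filter] at hx
      exact gg_gg hh hx.2.1
    · intro x hx
      rw [Finset.mem_erase, Finset.mem_filter] at hx
      exact gg_gg hh hx.2.1
  have hne_val : sval σ (a - 1) ≠ sval σ (a + 1) := by
    intro hc
    have := sval_injOn σ (by omega) (by omega) (by omega) (by omega) hc
    omega
  have hlt1 : sval (iota n a hh σ) (a + 1) < sval (iota n a hh σ) (a - 1) ↔
      sval σ (a - 1) < sval σ (a + 1) := by
    rw [sval_iota hh σ (a + 1), sval_iota hh σ (a - 1), rr_am1, rr_ap1 a hh.1]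
  have hflip : ((a - 1, a + 1) : ℕ × ℕ) ∈ (pairs n).filter
        (fun p => sval (iota n a hh σ) p.2 < sval (iota n a hh σ) p.1) ↔
      ((a - 1, a + 1) : ℕ × ℕ) ∉ (pairs n).filter (fun p => sval σ p.2 < sval σ p.1) := by
    rw [Finset.mem_filter, Finset.mem_filter]
    simp only [hepairs, true_and]
    show (sval (iota n a hh σ) (a + 1) < sval (iota n a hh σ) (a - 1)) ↔
      ¬ (sval σ (a + 1) < sval σ (a - 1))
    rw [hlt1]
    omega
  rw [Nat.odd_iff]
  by_cases heS : ((a - 1, a + 1) : ℕ × ℕ) ∈ (pairs n).filter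
      (fun p => sval (iota n a hh σ) p.2 < sval (iota n a hh σ) p.1)
  · have heT := hflip.mp heS
    have h1 := Finset.card_erase_add_one heS
    have h2 := Finset.erase_eq_of_notMem heT
    rw [h2] at hcard
    omega
  · have heT := not_not.mp (fun h => heS (hflip.mpr h))
    have h1 := Finset.card_erase_add_one heT
    have h2 := Finset.erase_eq_of_notMem heS
    rw [h2] at hcard
    omega

lemma LD_iota : LD (iota n a hh σ) = LD σ := by
  unfold LD
  rw [oinv_iota hh σ hn' hσ, onsp_iota hh σ hn' hσ]

lemma ellD_parity : Odd (ellD (iota n a hh σ) + ellD σ) := by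
  unfold ellD
  have h1 := inv_parity hh σ hn' hσ
  have h2 := nsp_iota hh σ hn' hσ
  rw [Nat.odd_iff] at h1 ⊢
  omega

lemma inquot_iota (I : Finset ℕ) (hI : I ⊆ Finset.range n) (hnotin : a + 1 ∉ I)
    (h3 : a = 3 → 0 ∉ I ∧ 1 ∉ I) (h4 : 4 ≤ a → a - 2 ∉ I) :
    InQuot (iota n a hh σ) I ↔ InQuot σ I := by
  unfold InQuot
  refine forall_congr' fun i => ?_
  refine imp_congr_right fun hi => ?_
  have hin : i < n := Finset.mem_range.mp (hI hi)
  have hb1 := bound_am1 hh σ hn' hσ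
  have hb2 := bound_ap1 hh σ hn' hσ
  unfold dval
  by_cases h0 : i = 0
  · subst h0
    rw [if_pos rfl, if_pos rfl, if_neg (by omega : ¬ (0:ℕ) + 1 = 0),
      if_neg (by omega : ¬ (0:ℕ) + 1 = 0)]
    rw [sval_iota hh σ 2, sval_iota hh σ 1]
    rcases (by omega : a = 2 ∨ a = 3 ∨ 4 ≤ a) with h | h | h
    · subst h
      have e1 : rr 2 1 = 3 := by unfold rr; split_ifs <;> omega
      have e2 : rr 2 2 = 2 := by unfold rr; split_ifs <;> omega
      rw [e1, e2, hσ]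
      norm_num at hb1 hb2 ⊢
      have hb3 : -(n : ℤ) < sval σ 1 ∧ sval σ 1 < n :=
        sval_bounds σ hn' (by omega) (by omega) hσ (by omega) (by omega) (by omega)
      have hb4 : -(n : ℤ) < sval σ 3 ∧ sval σ 3 < n :=
        sval_bounds σ hn' (by omega) (by omega) hσ (by omega) (by omega) (by omega)
      rcases hn' with rfl | rfl <;> omega
    · exact absurd hi (h3 h).1
    · rw [rr_self (by omega) (by omega), rr_self (by omega) (by omega)]
  · rw [if_neg h0, if_neg h0, if_neg (by omega : ¬ i + 1 = 0), if_neg (by omega : ¬ i + 1 = 0)]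
    rw [sval_iota hh σ i, sval_iota hh σ (i + 1)]
    by_cases hia : i = a - 1
    · have e1 : rr a i = a + 1 := by rw [hia, rr_am1]
      have e2 : rr a (i + 1) = a := by
        rw [(by omega : i + 1 = a), rr_a a hh.1]
      rw [e1, e2, (by omega : i + 1 = a), hσ, hia]
      rcases hn' with rfl | rfl <;> omega
    · by_cases hia2 : i = a
      · have e1 : rr a i = a := by rw [hia2, rr_a a hh.1]
        have e2 : rr a (i + 1) = a - 1 := by rw [hia2, rr_ap1 a hh.1]
        rw [e1, e2, hia2, hσ]
        rcases hn' with rfl | rfl <;> omega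
      · by_cases hia3 : i = a - 2
        · exfalso
          rcases (by omega : a = 3 ∨ 4 ≤ a) with h | h
          · have h1 : i = 1 := by omega
            exact (h3 h).2 (h1 ▸ hi)
          · exact h4 h (hia3 ▸ hi)
        · have hia4 : i ≠ a + 1 := fun hc => hnotin (hc ▸ hi)
          rw [rr_self hia hia4, rr_self (by omega) (by omega)]

end Aux3
/-- Lemma 3.7 (Brenti–Carnevale): under the stated conditions on `a` and `I`, the
contribution to `D_n^I(x)` of the elements with `σ(a) = n'` (`n' ∈ {n, -n}`) vanishes. -/
theorem stmt16 (n a : ℕ) (hn : 3 ≤ n) (ha : 2 ≤ a) (ha' : a ≤ n - 1)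
    (I : Finset ℕ) (hI : I ⊆ Finset.range n) (hnotin : a + 1 ∉ I)
    (h3 : a = 3 → 0 ∉ I ∧ 1 ∉ I) (h4 : 4 ≤ a → a - 2 ∉ I)
    (n' : ℤ) (hn' : n' = (n : ℤ) ∨ n' = -(n : ℤ)) :
    ∑ σ ∈ Finset.univ.filter
        (fun σ : SP n => IsEvenSP σ ∧ InQuot σ I ∧ sval σ a = n'),
      (-1 : Polynomial ℤ) ^ ellD σ * X ^ LD σ = 0 := by
  have hh : 2 ≤ a ∧ a + 1 ≤ n := ⟨ha, by omega⟩
  refine Finset.sum_involution (fun σ _ => iota n a hh σ) ?_ ?_ ?_ ?_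
  · intro σ hmem
    rw [Finset.mem_filter] at hmem
    obtain ⟨-, heven, hquot, hvala⟩ := hmem
    have hL := LD_iota hh σ hn' hvala
    have hell := ellD_parity hh σ hn' hvala
    have hsign : (-1 : Polynomial ℤ) ^ ellD (iota n a hh σ) = -(-1) ^ ellD σ := by
      have h2 : ((-1 : Polynomial ℤ)) ^ (ellD (iota n a hh σ) + ellD σ) = -1 :=
        hell.neg_one_pow
      have hsq : ((-1 : Polynomial ℤ)) ^ ellD σ * (-1) ^ ellD σ = 1 := by
        rw [← pow_add]
        exact Even.neg_one_pow ⟨ellD σ, rfl⟩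
      calc (-1 : Polynomial ℤ) ^ ellD (iota n a hh σ)
          = (-1) ^ ellD (iota n a hh σ) * ((-1) ^ ellD σ * (-1) ^ ellD σ) := by
            rw [hsq, mul_one]
        _ = ((-1) ^ (ellD (iota n a hh σ) + ellD σ)) * (-1) ^ ellD σ := by
            rw [pow_add]; ring
        _ = -(-1) ^ ellD σ := by rw [h2]; ring
    show (-1 : Polynomial ℤ) ^ ellD σ * X ^ LD σ +
      (-1) ^ ellD (iota n a hh σ) * X ^ LD (iota n a hh σ) = 0
    rw [hsign, hL]
    ring
  · intro σ _ _
    exact iota_ne hh σ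
  · intro σ hmem
    rw [Finset.mem_filter] at hmem ⊢
    obtain ⟨-, heven, hquot, hvala⟩ := hmem
    exact ⟨Finset.mem_univ _, (even_iota hh σ).mpr heven,
      (inquot_iota hh σ hn' hvala I hI hnotin h3 h4).mpr hquot,
      by rw [sval_iota_a hh σ]; exact hvala⟩
  · intro σ hmem
    exact iota_iota hh σ

end OddLength
end
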